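/- Let L be a real symmetric positive-semidefinite n×n matrix, μ ≥ 0 an eigenvalue of L with unit eigenvector φ, and λ± = ½(√(μ²+4) ± μ). Then the vectors (φ, λ⁺φ) and (φ, −λ⁻φ) in ℝ²ⁿ are eigenvectors of the block matrix GᵀG = [[I, L], [L, I+L²]] with eigenvalues (λ⁺)² and (λ⁻)² respectively, where G = [[0, I], [−I, −L]]. -/
import Mathlib


open Matrix

theorem stmt_12 (n : ℕ) (hn : 1 ≤ n) (L : Matrix (Fin n) (Fin n) ℝ)
    (hL : L.IsSymm) (hLpsd : L.PosSemidef)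
    (μ : ℝ) (hμ : 0 ≤ μ) (φ : Fin n → ℝ) (hφ : φ ≠ 0)
    (hunit : ∑ i, φ i ^ 2 = 1) (hLφ : L *ᵥ φ = μ • φ) :
    let G : Matrix (Fin n ⊕ Fin n) (Fin n ⊕ Fin n) ℝ := fromBlocks 0 1 (-1) (-L)
    let lp : ℝ := (Real.sqrt (μ ^ 2 + 4) + μ) / 2
    let lm : ℝ := (Real.sqrt (μ ^ 2 + 4) - μ) / 2
    let vp : Fin n ⊕ Fin n → ℝ := Sum.elim φ (fun i => lp * φ i)
    let vm : Fin n ⊕ Fin n → ℝ := Sum.elim φ (fun i => -lm * φ i)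
    Gᵀ * G = fromBlocks 1 L L (1 + L * L) ∧
    vp ≠ 0 ∧ (Gᵀ * G) *ᵥ vp = lp ^ 2 • vp ∧
    vm ≠ 0 ∧ (Gᵀ * G) *ᵥ vm = lm ^ 2 • vm := by
  intro G lp lm vp vm
  have hs : Real.sqrt (μ ^ 2 + 4) ^ 2 = μ ^ 2 + 4 := Real.sq_sqrt (by positivity)
  have hlp : lp ^ 2 = 1 + μ * lp := by
    show ((Real.sqrt (μ ^ 2 + 4) + μ) / 2) ^ 2 = 1 + μ * ((Real.sqrt (μ ^ 2 + 4) + μ) / 2)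
    nlinarith [hs]
  have hlm : lm ^ 2 = 1 - μ * lm := by
    show ((Real.sqrt (μ ^ 2 + 4) - μ) / 2) ^ 2 = 1 - μ * ((Real.sqrt (μ ^ 2 + 4) - μ) / 2)
    nlinarith [hs]
  have hG : Gᵀ * G = fromBlocks 1 L L (1 + L * L) := by
    show (fromBlocks (0 : Matrix (Fin n) (Fin n) ℝ) 1 (-1) (-L))ᵀ *
        fromBlocks 0 1 (-1) (-L) = _
    rw [fromBlocks_transpose, fromBlocks_multiply]
    simp [hL.eq, Matrix.mul_one, Matrix.one_mul]
  -- key computation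
  have key : ∀ c : ℝ, (fromBlocks (1 : Matrix (Fin n) (Fin n) ℝ) L L (1 + L * L)) *ᵥ
      Sum.elim φ (fun i => c * φ i) =
      Sum.elim ((1 + c * μ) • φ) ((μ + c + c * μ ^ 2) • φ) := by
    intro c
    have hc : (Sum.elim φ (fun i => c * φ i) ∘ Sum.inr) = c • φ := rfl
    have hc' : (Sum.elim φ (fun i => c * φ i) ∘ Sum.inl) = φ := rfl
    rw [fromBlocks_mulVec, hc, hc']
    have h1 : L *ᵥ (c • φ) = (c * μ) • φ := by
      rw [mulVec_smul, hLφ, smul_smul]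
    have h2 : (L * L) *ᵥ (c • φ) = (c * μ ^ 2) • φ := by
      rw [← mulVec_mulVec, h1, mulVec_smul, hLφ, smul_smul]
      ring_nf
    rw [one_mulVec, h1, add_smul, one_smul, hLφ, add_mulVec, one_mulVec, h2]
    ext x
    cases x with
    | inl i => rfl
    | inr i =>
        show μ * φ i + (c * φ i + c * μ ^ 2 * φ i) = (μ + c + c * μ ^ 2) * φ i
        ring
  have hmem : ∃ i, φ i ≠ 0 := by
    by_contra h
    push_neg at h
    exact hφ (funext fun i => h i)
  obtain ⟨i0, hi0⟩ := hmem
  refine ⟨hG, ?_, ?_, ?_, ?_⟩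
  · intro h
    exact hi0 (congrFun h (Sum.inl i0))
  · rw [hG]
    have := key lp
    rw [this]
    ext x
    cases x with
    | inl i =>
        simp only [Sum.elim_inl, Pi.smul_apply, smul_eq_mul, vp]
        linear_combination (-(φ i)) * hlp
    | inr i =>
        simp only [Sum.elim_inr, Pi.smul_apply, smul_eq_mul, vp]
        linear_combination (-(φ i) * (lp + μ)) * hlp
  · intro h
    exact hi0 (congrFun h (Sum.inl i0))
  · rw [hG]
    have := key (-lm)
    rw [this]
    ext x
    cases x with
    | inl i =>
        simp only [Sum.elim_inl, Pi.smul_apply, smul_eq_mul, vm]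
        linear_combination (-(φ i)) * hlm
    | inr i =>
        simp only [Sum.elim_inr, Pi.smul_apply, smul_eq_mul, vm]
        linear_combination (φ i * (lm - μ)) * hlm
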